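/- The series ∑_{n=1}^∞ ζ(2n)/(n(2n+1)·4^n) equals log π - 1. -/

import Mathlib

open Real Filter Topology Finset Nat Stirling

/-- The summand of the auxiliary double series. -/
noncomputable def fdb (n k : ℕ) : ℝ :=
  ((2 * ((k : ℝ) + 1))⁻¹) ^ (2 * n + 2) / ((n + 1) * (2 * n + 3))

/-- Value of the inner sum over `n` for fixed `k`. -/
noncomputable def Gterm (k : ℕ) : ℝ :=
  2 * Real.log (2 * k + 2) - (2 * k + 3) * Real.log (2 * k + 3)
    + (2 * k + 1) * Real.log (2 * k + 1) + 2

lemma innerA {x : ℝ} (hx0 : 0 < x) (hx1 : x < 1) :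
    HasSum (fun n : ℕ => x ^ (2 * n + 2) / ((n + 1) * (2 * n + 3)))
      (-Real.log (1 - x ^ 2) - (1 / x) * (Real.log (1 + x) - Real.log (1 - x)) + 2) := by
  have hxabs : |x| < 1 := by rw [abs_of_pos hx0]; exact hx1
  have hx2 : |x ^ 2| < 1 := by
    rw [abs_pow, abs_of_pos hx0]
    nlinarith
  have h1 : HasSum (fun n : ℕ => (x ^ 2) ^ (n + 1) / ((n : ℝ) + 1)) (-Real.log (1 - x ^ 2)) :=
    Real.hasSum_pow_div_log_of_abs_lt_one hx2
  have h2 : HasSum (fun k : ℕ => (2 : ℝ) * (1 / (2 * k + 1)) * x ^ (2 * k + 1))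
      (Real.log (1 + x) - Real.log (1 - x)) := Real.hasSum_log_sub_log_of_abs_lt_one hxabs
  have h3 : HasSum (fun k : ℕ => (2 : ℝ) * (1 / (2 * (k + 1) + 1)) * x ^ (2 * (k + 1) + 1))
      ((Real.log (1 + x) - Real.log (1 - x)) - 2 * x) := by
    have := (hasSum_nat_add_iff' (f := fun k : ℕ => (2 : ℝ) * (1 / (2 * k + 1)) * x ^ (2 * k + 1)) 1).mpr h2
    simpa using this
  have h4 := h1.sub (h3.mul_left (1 / x))
  have hxne : x ≠ 0 := ne_of_gt hx0
  have hfun : (fun n : ℕ => x ^ (2 * n + 2) / ((n + 1) * (2 * n + 3))) =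
      fun n : ℕ => (x ^ 2) ^ (n + 1) / ((n : ℝ) + 1) -
        (1 / x) * ((2 : ℝ) * (1 / (2 * (n + 1) + 1)) * x ^ (2 * (n + 1) + 1)) := by
    funext n
    have hn1 : ((n : ℝ) + 1) ≠ 0 := by positivity
    have hn3 : ((2 * n : ℝ) + 3) ≠ 0 := by positivity
    have hxp : x ^ (2 * (n + 1) + 1) = x * x ^ (2 * n + 2) := by
      rw [show 2 * (n + 1) + 1 = (2 * n + 2) + 1 by ring, pow_succ]; ring
    have hxq : (x ^ 2) ^ (n + 1) = x ^ (2 * n + 2) := by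
      rw [← pow_mul]; ring_nf
    rw [hxp, hxq]
    field_simp
    ring
  rw [hfun]
  convert h4 using 1
  · rfl
  field_simp
  ring

lemma innerB (k : ℕ) :
    HasSum (fun n : ℕ => fdb n k) (Gterm k) := by
  unfold fdb
  set a : ℝ := 2 * (k : ℝ) + 2 with ha
  have ha0 : 0 < a := by positivity
  have hk0 : (0:ℝ) ≤ (k:ℝ) := k.cast_nonneg
  have ham : 0 < a - 1 := by rw [ha]; linarith
  have hap : 0 < a + 1 := by positivity
  have hx : 2 * ((k : ℝ) + 1) = a := by rw [ha]; ring
  rw [hx]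
  have hx0 : 0 < a⁻¹ := by positivity
  have hx1 : a⁻¹ < 1 := by
    rw [inv_lt_one_iff₀]; right; rw [ha]; linarith
  have h := innerA hx0 hx1
  have e1 : 1 - (a⁻¹) ^ 2 = (a - 1) * (a + 1) / a ^ 2 := by field_simp; ring
  have e2 : 1 + a⁻¹ = (a + 1) / a := by field_simp
  have e3 : 1 - a⁻¹ = (a - 1) / a := by field_simp
  rw [e1, e2, e3] at h
  rw [Real.log_div (by positivity) (by positivity), Real.log_mul (ne_of_gt ham) (ne_of_gt hap),
    Real.log_pow, Real.log_div (ne_of_gt hap) (ne_of_gt ha0),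
    Real.log_div (ne_of_gt ham) (ne_of_gt ha0), one_div, inv_inv] at h
  have : Gterm k = -(Real.log (a - 1) + Real.log (a + 1) - (2 : ℕ) * Real.log a)
      - a * ((Real.log (a + 1) - Real.log a) - (Real.log (a - 1) - Real.log a)) + 2 := by
    unfold Gterm
    have h1 : a - 1 = 2 * (k : ℝ) + 1 := by rw [ha]; ring
    have h2 : a + 1 = 2 * (k : ℝ) + 3 := by rw [ha]; ring
    rw [h1, h2, ha]
    push_cast
    ring
  rw [this]
  exact h

lemma partialC (K : ℕ) : ∑ k ∈ range K, Gterm k =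
    2 * K * Real.log 2 + 2 * Real.log (K ! : ℝ)
      - (2 * K + 1) * Real.log (2 * K + 1) + 2 * K := by
  induction K with
  | zero => simp
  | succ K ih =>
    rw [Finset.sum_range_succ, ih]
    have hfac : ((K + 1)! : ℝ) = ((K : ℝ) + 1) * (K ! : ℝ) := by
      rw [Nat.factorial_succ]; push_cast; ring
    have hfpos : (0:ℝ) < (K ! : ℝ) := by exact_mod_cast K.factorial_pos
    have hlf : Real.log ((K+1)! : ℝ) = Real.log ((K:ℝ)+1) + Real.log (K ! : ℝ) := by
      rw [hfac, Real.log_mul (by positivity) (ne_of_gt hfpos)]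
    have hl2 : Real.log (2 * (K:ℝ) + 2) = Real.log 2 + Real.log ((K:ℝ)+1) := by
      rw [show 2*(K:ℝ)+2 = 2*((K:ℝ)+1) by ring, Real.log_mul two_ne_zero (by positivity)]
    unfold Gterm
    push_cast
    rw [hlf, hl2]
    ring

lemma limitD : Tendsto (fun K : ℕ => 2 * K * Real.log 2 + 2 * Real.log (K ! : ℝ)
      - (2 * K + 1) * Real.log (2 * K + 1) + 2 * K) atTop (𝓝 (Real.log π - 1)) := by
  have h2K : Tendsto (fun K : ℕ => (2 * K : ℝ)) atTop atTop :=
    (tendsto_natCast_atTop_atTop (R := ℝ)).const_mul_atTop two_pos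
  have p1 : Tendsto (fun K : ℕ => 2 * Real.log (stirlingSeq K)) atTop (𝓝 (Real.log π)) := by
    have hst := Stirling.tendsto_stirlingSeq_sqrt_pi
    have hcont : ContinuousAt Real.log (√π) :=
      Real.continuousAt_log (by positivity)
    have := (hcont.tendsto.comp hst).const_mul 2
    rw [show Real.log π = 2 * (Real.log π / 2) by ring]
    simpa [Real.log_sqrt Real.pi_pos.le, Function.comp] using this
  have hinv : Tendsto (fun K : ℕ => (1 : ℝ) + (2 * (K : ℝ))⁻¹) atTop (𝓝 1) := by
    have := h2K.inv_tendsto_atTop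
    simpa using tendsto_const_nhds.add this
  have p2 : Tendsto (fun K : ℕ => Real.log (1 + (2 * (K : ℝ))⁻¹)) atTop (𝓝 0) := by
    have hcont : ContinuousAt Real.log 1 := Real.continuousAt_log one_ne_zero
    have := hcont.tendsto.comp hinv
    simpa [Function.comp_def] using this
  have p3 : Tendsto (fun K : ℕ => (2 * (K : ℝ)) * Real.log (1 + (2 * (K : ℝ))⁻¹))
      atTop (𝓝 1) := by
    have base := Real.tendsto_mul_log_one_add_div_atTop 1
    refine (base.comp h2K).congr fun K => ?_
    simp [Function.comp, one_div]
  have hE : Tendsto (fun K : ℕ => 2 * Real.log (stirlingSeq K)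
      - Real.log (1 + (2 * (K : ℝ))⁻¹) - (2 * (K : ℝ)) * Real.log (1 + (2 * (K : ℝ))⁻¹))
      atTop (𝓝 (Real.log π - 0 - 1)) := (p1.sub p2).sub p3
  rw [show Real.log π - 0 - 1 = Real.log π - 1 by ring] at hE
  refine hE.congr' ?_
  filter_upwards [eventually_ge_atTop 1] with K hK
  have hK0 : (0 : ℝ) < K := by exact_mod_cast hK
  have hfpos : (0:ℝ) < (K ! : ℝ) := by exact_mod_cast K.factorial_pos
  have hsq : (0:ℝ) < √(2 * K : ℝ) := Real.sqrt_pos.mpr (by positivity)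
  have hpow : (0:ℝ) < ((K : ℝ) / Real.exp 1) ^ K := by positivity
  have hlogs : Real.log (stirlingSeq K) = Real.log (K ! : ℝ)
      - (Real.log (2 * (K:ℝ)) / 2 + (K : ℝ) * (Real.log (K : ℝ) - 1)) := by
    unfold stirlingSeq
    rw [Real.log_div (ne_of_gt hfpos) (by positivity), Real.log_mul (ne_of_gt hsq) (ne_of_gt hpow),
      Real.log_sqrt (by positivity), Real.log_pow,
      Real.log_div (ne_of_gt hK0) (Real.exp_ne_zero 1), Real.log_exp]
  have hl2K : Real.log (2 * (K:ℝ)) = Real.log 2 + Real.log (K:ℝ) :=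
    Real.log_mul two_ne_zero (ne_of_gt hK0)
  have hl1 : Real.log (1 + (2 * (K : ℝ))⁻¹)
      = Real.log (2 * (K:ℝ) + 1) - Real.log (2 * (K:ℝ)) := by
    rw [show (1 : ℝ) + (2 * (K : ℝ))⁻¹ = (2 * (K:ℝ) + 1) / (2 * (K:ℝ)) by field_simp,
      Real.log_div (by positivity) (by positivity)]
  rw [hlogs, hl1, hl2K]
  ring

lemma fdb_nonneg (n k : ℕ) : 0 ≤ fdb n k := by unfold fdb; positivity

lemma sq_summable : Summable (fun k : ℕ => ((k : ℝ) + 1)⁻¹ ^ 2) := by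
  have h : Summable (fun n : ℕ => 1 / (n : ℝ) ^ 2) := summable_one_div_nat_pow.mpr one_lt_two
  have := (summable_nat_add_iff 1).mpr h
  refine this.congr fun k => ?_
  push_cast
  rw [inv_pow, one_div]

lemma fdb_le (n k : ℕ) : fdb n k ≤ (1 / 4) ^ n * ((k : ℝ) + 1)⁻¹ ^ 2 := by
  unfold fdb
  have hk1 : (0:ℝ) < (k : ℝ) + 1 := by positivity
  have hx0 : (0:ℝ) ≤ (2 * ((k : ℝ) + 1))⁻¹ := by positivity
  have hden : (1:ℝ) ≤ ((n : ℝ) + 1) * (2 * n + 3) := by nlinarith [Nat.cast_nonneg (α := ℝ) n]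
  have h1 : ((2 * ((k : ℝ) + 1))⁻¹) ^ (2 * n + 2)
      ≤ (1 / 4) ^ n * ((k : ℝ) + 1)⁻¹ ^ 2 := by
    have e : ((2 * ((k : ℝ) + 1))⁻¹) ^ (2 * n + 2)
        = ((2 * ((k : ℝ) + 1))⁻¹ ^ 2) ^ n * ((2 * ((k : ℝ) + 1))⁻¹) ^ 2 := by
      rw [← pow_mul, ← pow_add]
    rw [e]
    have b1 : ((2 * ((k : ℝ) + 1))⁻¹ ^ 2) ^ n ≤ (1 / 4 : ℝ) ^ n := by
      apply pow_le_pow_left₀ (by positivity)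
      have : (2 * ((k : ℝ) + 1))⁻¹ ≤ 1 / 2 := by
        rw [inv_le_iff_one_le_mul₀ (by positivity)]; nlinarith [Nat.cast_nonneg (α := ℝ) k]
      nlinarith
    have b2 : ((2 * ((k : ℝ) + 1))⁻¹) ^ 2 ≤ ((k : ℝ) + 1)⁻¹ ^ 2 := by
      apply pow_le_pow_left₀ (by positivity)
      apply inv_anti₀ hk1
      nlinarith
    calc ((2 * ((k : ℝ) + 1))⁻¹ ^ 2) ^ n * ((2 * ((k : ℝ) + 1))⁻¹) ^ 2
        ≤ (1/4:ℝ) ^ n * ((2 * ((k : ℝ) + 1))⁻¹) ^ 2 := by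
          apply mul_le_mul_of_nonneg_right b1 (by positivity)
      _ ≤ (1/4:ℝ) ^ n * ((k : ℝ) + 1)⁻¹ ^ 2 := by
          apply mul_le_mul_of_nonneg_left b2 (by positivity)
  calc ((2 * ((k : ℝ) + 1))⁻¹) ^ (2 * n + 2) / (((n:ℝ) + 1) * (2 * n + 3))
      ≤ ((2 * ((k : ℝ) + 1))⁻¹) ^ (2 * n + 2) / 1 := by
        apply div_le_div_of_nonneg_left (by positivity) (by norm_num) hden
    _ = ((2 * ((k : ℝ) + 1))⁻¹) ^ (2 * n + 2) := by ring
    _ ≤ _ := h1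

lemma fdb_row_summable (n : ℕ) : Summable (fun k : ℕ => fdb n k) := by
  apply Summable.of_nonneg_of_le (fun k => fdb_nonneg n k) (fun k => fdb_le n k)
  exact (sq_summable.mul_left _)

lemma fdb_col_summable : Summable (fun n : ℕ => ∑' k : ℕ, fdb n k) := by
  have hb : Summable (fun n : ℕ => (1 / 4 : ℝ) ^ n * ∑' k : ℕ, ((k : ℝ) + 1)⁻¹ ^ 2) :=
    (summable_geometric_of_lt_one (by norm_num) (by norm_num)).mul_right _
  apply Summable.of_nonneg_of_le (fun n => tsum_nonneg fun k => fdb_nonneg n k) (fun n => ?_) hb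
  calc ∑' k : ℕ, fdb n k ≤ ∑' k : ℕ, (1 / 4 : ℝ) ^ n * ((k : ℝ) + 1)⁻¹ ^ 2 :=
        Summable.tsum_le_tsum (fun k => fdb_le n k) (fdb_row_summable n) (sq_summable.mul_left _)
    _ = (1 / 4 : ℝ) ^ n * ∑' k : ℕ, ((k : ℝ) + 1)⁻¹ ^ 2 := tsum_mul_left

lemma fdb_summable : Summable (Function.uncurry fdb) :=
  (summable_prod_of_nonneg (fun p => fdb_nonneg p.1 p.2)).mpr
    ⟨fun n => fdb_row_summable n, fdb_col_summable⟩

lemma realSum : ∑' n : ℕ, ∑' k : ℕ, fdb n k = Real.log π - 1 := by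
  rw [← Summable.tsum_comm fdb_summable]
  have hG : ∀ k, ∑' n : ℕ, fdb n k = Gterm k := fun k => (innerB k).tsum_eq
  rw [tsum_congr hG]
  have hGsum : Summable Gterm := by
    have h := (summable_prod_of_nonneg
        (f := fun p : ℕ × ℕ => fdb p.2 p.1) (fun p => fdb_nonneg _ _)).mp fdb_summable.prod_symm
    exact h.2.congr fun k => hG k
  have ht := hGsum.hasSum.tendsto_sum_nat
  have ht' : Tendsto (fun K : ℕ => 2 * K * Real.log 2 + 2 * Real.log (K ! : ℝ)
      - (2 * K + 1) * Real.log (2 * K + 1) + 2 * K) atTop (𝓝 (∑' k, Gterm k)) :=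
    ht.congr fun K => partialC K
  exact tendsto_nhds_unique ht' limitD

theorem stmt7 :
    ∑' n : ℕ, riemannZeta (2 * (n + 1)) / ((n + 1) * (2 * n + 3) * 4 ^ (n + 1)) =
      ((Real.log π - 1 : ℝ) : ℂ) := by
  have hterm : ∀ n : ℕ, riemannZeta (2 * (n + 1)) / ((n + 1) * (2 * n + 3) * 4 ^ (n + 1))
      = (((∑' k : ℕ, fdb n k : ℝ)) : ℂ) := by
    intro n
    have harg : (2 * ((n : ℂ) + 1)) = ((2 * n + 2 : ℕ) : ℂ) := by push_cast; ring
    have hz : riemannZeta (2 * ((n : ℂ) + 1)) = ((∑' m : ℕ, 1 / (m : ℝ) ^ (2 * n + 2) : ℝ) : ℂ) := by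
      rw [harg, zeta_nat_eq_tsum_of_gt_one (by omega), Complex.ofReal_tsum]
      congr 1
      funext m
      push_cast
      ring
    rw [hz]
    have hden : (((n : ℂ) + 1) * (2 * (n : ℂ) + 3) * 4 ^ (n + 1))
        = ((((n : ℝ) + 1) * (2 * n + 3) * 4 ^ (n + 1) : ℝ) : ℂ) := by push_cast; ring
    rw [hden, ← Complex.ofReal_div]
    congr 1
    -- real identity
    have hsum : Summable (fun m : ℕ => 1 / (m : ℝ) ^ (2 * n + 2)) :=
      summable_one_div_nat_pow.mpr (by omega)
    rw [Summable.tsum_eq_zero_add hsum]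
    have h0 : 1 / ((0 : ℕ) : ℝ) ^ (2 * n + 2) = 0 := by
      norm_num
    rw [h0, zero_add]
    rw [eq_comm, ← tsum_div_const]
    apply tsum_congr
    intro k
    unfold fdb
    have h4 : (4 : ℝ) ^ (n + 1) = 2 ^ (2 * n + 2) := by
      rw [show (4:ℝ) = 2 ^ 2 by norm_num, ← pow_mul]
      ring_nf
    rw [h4, mul_inv, mul_pow]
    have hk : ((k : ℝ) + 1) ≠ 0 := by positivity
    have h2 : ((2 : ℝ) ^ (2 * n + 2)) ≠ 0 := by positivity
    push_cast
    rw [inv_pow, inv_pow]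
    field_simp
  rw [tsum_congr hterm, ← Complex.ofReal_tsum, realSum]
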